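/- For a unit vector x in H (‖x‖ = 1), the following three conditions are equivalent: (a) the one-dimensional subspace ℂ ∙ x spanned by x is copyable along δ_e; (b) there exists a scalar z : ℂ with |z| = 1 such that δ_e x = z • (x ⊗ₜ x); (c) there exists a unit vector x' in H with ℂ ∙ x' = ℂ ∙ x and δ_e x' = x' ⊗ₜ x'. -/

import Mathlib

open scoped TensorProduct InnerProductSpace

/-- The orthogonal projection of `H` onto the subspace `K`, regarded as an endomorphism
`P_K : H →ₗ[ℂ] H`. -/
noncomputable def projL {H : Type*} [NormedAddCommGroup H] [InnerProductSpace ℂ H]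
    [FiniteDimensional ℂ H] (K : Submodule ℂ H) : H →ₗ[ℂ] H :=
  K.subtype ∘ₗ K.orthogonalProjectionOnto.toLinearMap

/-- The classical structure `δ_e : H →ₗ[ℂ] H ⊗[ℂ] H` associated with an orthonormal basis
`e`, determined by `δ_e x = ∑ i, ⟪e i, x⟫_ℂ • (e i ⊗ₜ e i)`. -/
noncomputable def delta {ι H : Type*} [Fintype ι] [NormedAddCommGroup H]
    [InnerProductSpace ℂ H] (e : ι → H) : H →ₗ[ℂ] H ⊗[ℂ] H :=
  ∑ i, (innerSL ℂ (e i)).toLinearMap.smulRight (e i ⊗ₜ[ℂ] e i)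

/-- A subspace `K` of `H` is copyable along `δ_e` if `δ_e ∘ₗ P_K = (P_K ⊗ P_K) ∘ₗ δ_e`. -/
def Copyable {ι H : Type*} [Fintype ι] [NormedAddCommGroup H] [InnerProductSpace ℂ H]
    [FiniteDimensional ℂ H] (e : ι → H) (K : Submodule ℂ H) : Prop :=
  delta e ∘ₗ projL K = TensorProduct.map (projL K) (projL K) ∘ₗ delta e

/-! Comparing coordinates in the product basis `e i ⊗ₜ e j`, the equation
`δ_e x = z • (x ⊗ₜ x)` reads `δ_ij ⟪e i, x⟫ = z ⟪e i, x⟫ ⟪e j, x⟫`; hence for `x ≠ 0` exactly one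
coordinate of `x` is nonzero, `x` is a multiple of a basis vector, and `z` is the inverse of that
coordinate. Copyability of `ℂ ∙ x` gives such an equation because `P ⊗ P` maps into
`ℂ ∙ (x ⊗ₜ x)` and `P x = x`; conversely each line `ℂ ∙ e i` is copyable, as one checks on the
basis `e`. -/

section

variable {ι H : Type*} [Fintype ι] [NormedAddCommGroup H] [InnerProductSpace ℂ H]

lemma delta_apply (e : ι → H) (x : H) :
    delta e x = ∑ i, ⟪e i, x⟫_ℂ • (e i ⊗ₜ[ℂ] e i) := by
  simp [delta]

lemma delta_apply_basis (e : OrthonormalBasis ι ℂ H) (i : ι) :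
    delta e (e i) = e i ⊗ₜ[ℂ] e i := by
  classical
  simp [delta_apply, e.inner_eq_ite]

lemma tensorProduct_repr_delta [DecidableEq ι] (e : OrthonormalBasis ι ℂ H) (x : H) (i j : ι) :
    (e.toBasis.tensorProduct e.toBasis).repr (delta e x) (i, j) =
      if i = j then ⟪e i, x⟫_ℂ else 0 := by
  simp [delta_apply, Module.Basis.tensorProduct_repr_tmul_apply, eq_comm]

lemma exists_eq_smul_of_delta_eq_smul_tmul (e : OrthonormalBasis ι ℂ H) {x : H} (hx : x ≠ 0)
    {z : ℂ} (h : delta e x = z • (x ⊗ₜ[ℂ] x)) : ∃ i, ∃ c : ℂ, z * c = 1 ∧ x = c • e i := by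
  classical
  have hcoord (i j : ι) :
      (if i = j then ⟪e i, x⟫_ℂ else 0) = z * (⟪e i, x⟫_ℂ * ⟪e j, x⟫_ℂ) := by
    simpa [tensorProduct_repr_delta, Module.Basis.tensorProduct_repr_tmul_apply,
      OrthonormalBasis.repr_apply_apply, mul_comm]
      using congrArg (fun w => (e.toBasis.tensorProduct e.toBasis).repr w (i, j)) h
  obtain ⟨i, hi⟩ : ∃ i, ⟪e i, x⟫_ℂ ≠ 0 := by
    by_contra! hc
    apply hx
    rw [← e.sum_repr' x]
    simp [hc]
  have hzc : z * ⟪e i, x⟫_ℂ = 1 := by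
    have hdiag := hcoord i i
    rw [if_pos rfl] at hdiag
    exact mul_left_cancel₀ hi (by linear_combination -hdiag)
  have hvanish (j : ι) (hj : j ≠ i) : ⟪e j, x⟫_ℂ = 0 := by
    simpa [hj.symm, hi, left_ne_zero_of_mul_eq_one hzc] using hcoord i j
  refine ⟨i, ⟪e i, x⟫_ℂ, hzc, ?_⟩
  exact (e.sum_repr' x).symm.trans
    (Finset.sum_eq_single i (fun j _ hj => by rw [hvanish j hj, zero_smul]) (by simp))

lemma span_singleton_eq_of_delta_eq_smul_tmul (e : OrthonormalBasis ι ℂ H) {x : H} (hx : x ≠ 0)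
    {z : ℂ} (h : delta e x = z • (x ⊗ₜ[ℂ] x)) : ∃ i, (ℂ ∙ x) = ℂ ∙ e i := by
  obtain ⟨i, c, hzc, rfl⟩ := exists_eq_smul_of_delta_eq_smul_tmul e hx h
  exact ⟨i, Submodule.span_singleton_smul_eq (IsUnit.of_mul_eq_one_right z hzc) (e i)⟩

section Projection

variable [FiniteDimensional ℂ H] {x : H}

lemma projL_span_singleton (hx : ‖x‖ = 1) (y : H) : projL (ℂ ∙ x) y = ⟪x, y⟫_ℂ • x :=
  Submodule.starProjection_unit_singleton ℂ hx y

lemma map_projL_span_singleton_tmul (hx : ‖x‖ = 1) (a b : H) :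
    TensorProduct.map (projL (ℂ ∙ x)) (projL (ℂ ∙ x)) (a ⊗ₜ[ℂ] b) =
      (⟪x, a⟫_ℂ * ⟪x, b⟫_ℂ) • (x ⊗ₜ[ℂ] x) := by
  rw [TensorProduct.map_tmul, projL_span_singleton hx, projL_span_singleton hx,
    TensorProduct.smul_tmul_smul]

lemma map_projL_span_singleton_mem (hx : ‖x‖ = 1) (w : H ⊗[ℂ] H) :
    TensorProduct.map (projL (ℂ ∙ x)) (projL (ℂ ∙ x)) w ∈ ℂ ∙ (x ⊗ₜ[ℂ] x) := by
  induction w using TensorProduct.induction_on with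
  | zero => simp
  | tmul a b =>
    rw [map_projL_span_singleton_tmul hx]
    exact Submodule.smul_mem _ _ (Submodule.mem_span_singleton_self _)
  | add v w hv hw => simpa using add_mem hv hw

lemma Copyable.exists_delta_eq_smul_tmul {e : ι → H} (h : Copyable e (ℂ ∙ x)) (hx : ‖x‖ = 1) :
    ∃ z : ℂ, delta e x = z • (x ⊗ₜ[ℂ] x) := by
  obtain ⟨z, hz⟩ := Submodule.mem_span_singleton.mp (map_projL_span_singleton_mem hx (delta e x))
  have hPx : projL (ℂ ∙ x) x = x :=
    Submodule.starProjection_eq_self_iff.mpr (Submodule.mem_span_singleton_self x)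
  refine ⟨z, ?_⟩
  calc delta e x = delta e (projL (ℂ ∙ x) x) := by rw [hPx]
    _ = TensorProduct.map (projL (ℂ ∙ x)) (projL (ℂ ∙ x)) (delta e x) := LinearMap.congr_fun h x
    _ = z • (x ⊗ₜ[ℂ] x) := hz.symm

lemma copyable_span_basis (e : OrthonormalBasis ι ℂ H) (i : ι) : Copyable e (ℂ ∙ e i) := by
  classical
  refine e.toBasis.ext fun j => ?_
  simp only [LinearMap.comp_apply, OrthonormalBasis.coe_toBasis]
  rw [projL_span_singleton (e.norm_eq_one i), map_smul, delta_apply_basis, delta_apply_basis,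
    map_projL_span_singleton_tmul (e.norm_eq_one i), e.inner_eq_ite]
  split_ifs <;> simp

end Projection

end

/-- For a unit vector `x` in `H`, the following are equivalent:
(a) the one-dimensional subspace `ℂ ∙ x` is copyable along `δ_e`;
(b) there is a phase `z : ℂ` with `|z| = 1` such that `δ_e x = z • (x ⊗ₜ x)`;
(c) there is a unit vector `x'` with `ℂ ∙ x' = ℂ ∙ x` and `δ_e x' = x' ⊗ₜ x'`. -/
theorem copyable_unitVector_tfae
    {ι H : Type*} [Fintype ι] [NormedAddCommGroup H] [InnerProductSpace ℂ H]
    [FiniteDimensional ℂ H] (e : OrthonormalBasis ι ℂ H) (x : H) (hx : ‖x‖ = 1) :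
    List.TFAE
      [ Copyable (⇑e) (ℂ ∙ x),
        ∃ z : ℂ, ‖z‖ = 1 ∧ delta (⇑e) x = z • (x ⊗ₜ[ℂ] x),
        ∃ x' : H, ‖x'‖ = 1 ∧ (ℂ ∙ x') = (ℂ ∙ x) ∧ delta (⇑e) x' = x' ⊗ₜ[ℂ] x' ] := by
  have hx0 : x ≠ 0 := norm_ne_zero_iff.mp (by rw [hx]; exact one_ne_zero)
  tfae_have 1 → 2
  | hcopy => by
    obtain ⟨z, hz⟩ := hcopy.exists_delta_eq_smul_tmul hx
    obtain ⟨i, c, hzc, hxc⟩ := exists_eq_smul_of_delta_eq_smul_tmul e hx0 hz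
    have hc : ‖c‖ = 1 := by rw [← hx, hxc, norm_smul, e.norm_eq_one, mul_one]
    exact ⟨z, by simpa [hc] using congrArg norm hzc, hz⟩
  tfae_have 2 → 3
  | ⟨z, _, hz⟩ => by
    obtain ⟨i, hspan⟩ := span_singleton_eq_of_delta_eq_smul_tmul e hx0 hz
    exact ⟨e i, e.norm_eq_one i, hspan.symm, delta_apply_basis e i⟩
  tfae_have 3 → 1
  | ⟨x', hx', hspan, hd⟩ => by
    obtain ⟨i, hspan'⟩ := span_singleton_eq_of_delta_eq_smul_tmul e
      (norm_ne_zero_iff.mp (by rw [hx']; exact one_ne_zero)) (z := 1) (by rw [hd, one_smul])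
    rw [← hspan, hspan']
    exact copyable_span_basis e i
  tfae_finish
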